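/- Let U, Û ∈ O_{p,r}, let U_⊥ be an orthogonal complement of U, and let T be a p×q matrix of rank at most r whose column space equals the column space of U, with smallest nonzero singular value σ_r(T) > 0. Then ‖sinΘ(Û, U)‖ = ‖Û_⊥ᵀ U‖ ≤ ‖Û_⊥ᵀ T‖ / σ_r(T), where Û_⊥ is an orthogonal complement of Û. -/

import Mathlib

/-!
Since `T = U M`, we have `Û_⊥ᵀ T = (Û_⊥ᵀ U) M`. The bound `‖Mᵀ v‖ ≥ σ ‖v‖` makes `M M†`
injective, so every `x` has the preimage `y = M† z`, `z = (M M†)⁻¹ x`, under `M`, and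
`σ ‖y‖ ≤ ‖x‖` because `‖y‖² = ⟪z, x⟫ ≤ ‖z‖ ‖x‖ ≤ ‖y‖ ‖x‖ / σ`.
Hence `‖Û_⊥ᵀ U x‖ = ‖Û_⊥ᵀ T y‖ ≤ ‖Û_⊥ᵀ T‖ ‖x‖ / σ`, where `spec` is the `L²` operator norm.
-/

open Matrix

/-- Spectral (operator) norm of a real matrix. -/
noncomputable def spec {m n : ℕ} (A : Matrix (Fin m) (Fin n) ℝ) : ℝ :=
  sSup {c : ℝ | ∃ v : Fin n → ℝ, (∑ j, v j ^ 2) ≤ 1 ∧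
    c = Real.sqrt (∑ i, (A.mulVec v i) ^ 2)}

open scoped InnerProductSpace InnerProduct Matrix.Norms.L2Operator
open WithLp

namespace ContinuousLinearMap

variable {𝕜 E F : Type*} [RCLike 𝕜]
  [NormedAddCommGroup E] [InnerProductSpace 𝕜 E] [CompleteSpace E]
  [NormedAddCommGroup F] [InnerProductSpace 𝕜 F] [CompleteSpace F] [FiniteDimensional 𝕜 F]

theorem exists_apply_eq_and_mul_norm_le_of_mul_norm_le_norm_adjoint (f : E →L[𝕜] F) {σ : ℝ}
    (hσ : 0 < σ) (h : ∀ v, σ * ‖v‖ ≤ ‖(f†) v‖) (x : F) :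
    ∃ y, f y = x ∧ σ * ‖y‖ ≤ ‖x‖ := by
  have hgram : ∀ z, RCLike.re ⟪z, (f ∘L f†) z⟫_𝕜 = ‖(f†) z‖ ^ 2 := fun z => by
    rw [comp_apply, ← adjoint_inner_left, inner_self_eq_norm_sq]
  have hinj : Function.Injective (f ∘L f†) := by
    refine (injective_iff_map_eq_zero _).mpr fun z hz => norm_le_zero_iff.mp ?_
    have hadj : ‖(f†) z‖ = 0 := by simpa [hz] using (hgram z).symm
    exact nonpos_of_mul_nonpos_right (hadj ▸ h z) hσ
  obtain ⟨z, hz⟩ :=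
    (LinearMap.injective_iff_surjective (f := ((f ∘L f†) : F →ₗ[𝕜] F))).mp hinj x
  refine ⟨(f†) z, by simpa using hz, ?_⟩
  set y := (f†) z
  have hnorm_sq : ‖y‖ ^ 2 ≤ ‖z‖ * ‖x‖ := by
    rw [← hgram, show (f ∘L f†) z = x from hz]
    exact re_inner_le_norm z x
  have hmul : ‖y‖ * (σ * ‖y‖) ≤ ‖y‖ * ‖x‖ :=
    calc ‖y‖ * (σ * ‖y‖) = σ * ‖y‖ ^ 2 := by ring
      _ ≤ σ * (‖z‖ * ‖x‖) := by gcongr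
      _ = σ * ‖z‖ * ‖x‖ := by ring
      _ ≤ ‖y‖ * ‖x‖ := by gcongr; exact h z
  rcases (norm_nonneg y).eq_or_lt with hzero | hpos
  · rw [← hzero, mul_zero]
    exact norm_nonneg x
  · exact le_of_mul_le_mul_left hmul hpos

theorem opNorm_le_opNorm_comp_div_of_mul_norm_le_norm_adjoint {G : Type*}
    [SeminormedAddCommGroup G] [NormedSpace 𝕜 G] (A : F →L[𝕜] G) (f : E →L[𝕜] F) {σ : ℝ}
    (hσ : 0 < σ) (h : ∀ v, σ * ‖v‖ ≤ ‖(f†) v‖) :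
    ‖A‖ ≤ ‖A ∘L f‖ / σ := by
  refine opNorm_le_bound _ (by positivity) fun x => ?_
  obtain ⟨y, rfl, hy⟩ := f.exists_apply_eq_and_mul_norm_le_of_mul_norm_le_norm_adjoint hσ h x
  calc ‖A (f y)‖ = ‖(A ∘L f) y‖ := rfl
    _ ≤ ‖A ∘L f‖ * ‖y‖ := le_opNorm _ _
    _ = ‖A ∘L f‖ / σ * (σ * ‖y‖) := by field_simp
    _ ≤ ‖A ∘L f‖ / σ * ‖f y‖ := by gcongr

end ContinuousLinearMap

namespace Matrix

variable {𝕜 m n l : Type*} [RCLike 𝕜] [Fintype m] [Fintype n] [DecidableEq n]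
  [Fintype l] [DecidableEq l]

theorem l2_opNorm_le_l2_opNorm_mul_div (A : Matrix m n 𝕜) (M : Matrix n l 𝕜) {σ : ℝ}
    (hσ : 0 < σ) (h : ∀ v : n → 𝕜, σ * ‖toLp 2 v‖ ≤ ‖toLp 2 (Mᴴ *ᵥ v)‖) :
    ‖A‖ ≤ ‖A * M‖ / σ := by
  have hmul : (toEuclideanLin ≪≫ₗ LinearMap.toContinuousLinearMap) (A * M) =
      (toEuclideanLin ≪≫ₗ LinearMap.toContinuousLinearMap) A ∘L
        (toEuclideanLin ≪≫ₗ LinearMap.toContinuousLinearMap) M := by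
    ext1 x
    exact congr(toLp 2 ($(Matrix.toLin'_mul A M) x))
  have hadj : ∀ v, ContinuousLinearMap.adjoint
      ((toEuclideanLin ≪≫ₗ LinearMap.toContinuousLinearMap) M) v =
      toLp 2 (Mᴴ *ᵥ ofLp v) := fun v => by
    rw [LinearEquiv.trans_apply, ← LinearMap.adjoint_toContinuousLinearMap,
      ← toEuclideanLin_conjTranspose_eq_adjoint]
    rfl
  rw [l2_opNorm_def, l2_opNorm_def, hmul]
  exact ContinuousLinearMap.opNorm_le_opNorm_comp_div_of_mul_norm_le_norm_adjoint _ _ hσ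
    fun v => (hadj v).symm ▸ h (ofLp v)

end Matrix

theorem EuclideanSpace.norm_toLp_eq_sqrt_sum_sq {n : Type*} [Fintype n] (v : n → ℝ) :
    ‖toLp 2 v‖ = √(∑ i, v i ^ 2) := by
  simp [EuclideanSpace.norm_eq]

theorem spec_eq_l2_opNorm {m n : ℕ} (A : Matrix (Fin m) (Fin n) ℝ) : spec A = ‖A‖ := by
  rw [l2_opNorm_def, ← ContinuousLinearMap.sSup_unitClosedBall_eq_norm, spec]
  congr 1
  ext c
  simp only [Set.mem_ofPred_eq, Set.mem_image, Metric.mem_closedBall, dist_zero_right]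
  constructor
  · rintro ⟨v, hv, rfl⟩
    refine ⟨toLp 2 v, ?_, ?_⟩
    · rw [EuclideanSpace.norm_toLp_eq_sqrt_sum_sq]
      exact Real.sqrt_le_one.mpr hv
    · simp [EuclideanSpace.norm_toLp_eq_sqrt_sum_sq]
  · rintro ⟨x, hx, rfl⟩
    obtain ⟨v, rfl⟩ : ∃ v, toLp 2 v = x := ⟨ofLp x, toLp_ofLp 2 x⟩
    refine ⟨v, ?_, ?_⟩
    · rw [EuclideanSpace.norm_toLp_eq_sqrt_sum_sq] at hx
      exact Real.sqrt_le_one.mp hx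
    · simp [EuclideanSpace.norm_toLp_eq_sqrt_sum_sq]

theorem stmt12_general (p q r : ℕ)
    (U : Matrix (Fin p) (Fin r) ℝ)
    (Uhatperp : Matrix (Fin p) (Fin (p - r)) ℝ)
    (T : Matrix (Fin p) (Fin q) ℝ) (M : Matrix (Fin r) (Fin q) ℝ)
    (hT : T = U * M)
    (σ : ℝ) (hσ : 0 < σ)
    (hσr : ∀ v : Fin r → ℝ, σ ^ 2 * (∑ i, v i ^ 2) ≤ ∑ j, (Matrix.vecMul v M j) ^ 2) :
    spec (Uhatperpᵀ * U) ≤ spec (Uhatperpᵀ * T) / σ := by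
  rw [spec_eq_l2_opNorm, spec_eq_l2_opNorm, hT, ← Matrix.mul_assoc]
  refine l2_opNorm_le_l2_opNorm_mul_div _ _ hσ fun v => ?_
  rw [conjTranspose_eq_transpose_of_trivial, mulVec_transpose,
    EuclideanSpace.norm_toLp_eq_sqrt_sum_sq, EuclideanSpace.norm_toLp_eq_sqrt_sum_sq,
    ← Real.sqrt_sq hσ.le, ← Real.sqrt_mul (sq_nonneg σ)]
  exact Real.sqrt_le_sqrt (hσr v)

/-- If `T` has rank at most `r`, its column space equals that of `U ∈ O_{p,r}` (i.e.
`T = U·(UᵀT)`), and `σ > 0` is a lower bound on the `r`-th singular value of `T`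
(equivalently, `‖vᵀM‖ ≥ σ‖v‖` for all `v`, where `M = UᵀT`), then
`‖sinΘ(Û,U)‖ = ‖Û_⊥ᵀU‖ ≤ ‖Û_⊥ᵀT‖/σ_r(T)`. -/
theorem stmt12 (p q r : ℕ)
    (U Uhat : Matrix (Fin p) (Fin r) ℝ)
    (Uhatperp : Matrix (Fin p) (Fin (p - r)) ℝ)
    (hU : Uᵀ * U = 1) (hUhat : Uhatᵀ * Uhat = 1)
    (hUhatperp : Uhatperpᵀ * Uhatperp = 1)
    (hperp : Uhatᵀ * Uhatperp = 0)
    (hcompl : Uhat * Uhatᵀ + Uhatperp * Uhatperpᵀ = 1)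
    (T : Matrix (Fin p) (Fin q) ℝ) (M : Matrix (Fin r) (Fin q) ℝ)
    (hM : M = Uᵀ * T) (hT : T = U * M)
    (σ : ℝ) (hσ : 0 < σ)
    (hσr : ∀ v : Fin r → ℝ, σ ^ 2 * (∑ i, v i ^ 2) ≤ ∑ j, (Matrix.vecMul v M j) ^ 2) :
    spec (Uhatperpᵀ * U) ≤ spec (Uhatperpᵀ * T) / σ :=
  stmt12_general p q r U Uhatperp T M hT σ hσ hσr
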